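/- arXiv:2102.08149 — 2 statements merged into one kernel-verified Lean document; each statement's English description precedes it below -/
import Mathlib

section
/- Fix a ∈ (0, π/3) and a function q : ℝ → ℂ, square-integrable on (0, π), with q(x) = 0 for all x outside (a, π) and q(x) = 0 for almost every x ∈ (3a, π). Fix ρ ∈ ℂ, ρ ≠ 0, λ = ρ². For ν ∈ {0,1} let y_{0,0}(x,λ) = cos(ρx), y_{1,0}(x,λ) = sin(ρx)/ρ, and y_{ν,k}(x,λ) = ∫_a^x (sin ρ(x−t)/ρ) q(t) y_{ν,k−1}(t−a, λ) dt for k ≥ 1. Then y_{ν,3}(x,λ) = 0 for all x ∈ [0, π], and consequently the function Y_ν(x,λ) := y_{ν,0}(x,λ) + y_{ν,1}(x,λ) + y_{ν,2}(x,λ) satisfies the Volterra integral equation Y_ν(x,λ) = y_{ν,0}(x,λ) + ∫_a^x (sin ρ(x−t)/ρ) q(t) Y_ν(t−a, λ) dt for all x ∈ [0, π]. -/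
open MeasureTheory Set
open scoped Real

noncomputable def y0 (ρ : ℂ) (ν : ℕ) (x : ℝ) : ℂ :=
  if ν = 0 then Complex.cos (ρ * (x : ℂ)) else Complex.sin (ρ * (x : ℂ)) / ρ

noncomputable def ySeq (a : ℝ) (q : ℝ → ℂ) (ρ : ℂ) (ν : ℕ) : ℕ → ℝ → ℂ
  | 0 => y0 ρ ν
  | k + 1 => fun x => ∫ t in a..x,
      (Complex.sin (ρ * ((x - t : ℝ) : ℂ)) / ρ) * q t * ySeq a q ρ ν k (t - a)
noncomputable def Yfun (a : ℝ) (q : ℝ → ℂ) (ρ : ℂ) (ν : ℕ) (x : ℝ) : ℂ :=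
  ySeq a q ρ ν 0 x + ySeq a q ρ ν 1 x + ySeq a q ρ ν 2 x

/-! The successive approximations are the iterates `y_k = V^k y_0` of the delay operator
`V g (x) = ∫_a^x (sin ρ(x-t) / ρ) q(t) g(t-a) dt`. Since `q = 0` on `(-∞, a]` and `V` shifts the
argument by `a`, `y_k` vanishes on `(-∞, k a]` for `k ≥ 1`; since moreover `q = 0` a.e. on
`(3a, ∞)`, `y_3 = 0` everywhere. Separating the variables in `sin ρ(x-t)` shows that `V` maps
continuous functions to continuous ones, so it is additive on `y_0, y_1, y_2`, and
`V (y_0 + y_1 + y_2) = y_1 + y_2 + y_3 = y_1 + y_2`. -/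

theorem MeasureTheory.MemLp.integrable_of_eq_zero_off {α E : Type*} [MeasurableSpace α]
    [NormedAddCommGroup E] {μ : Measure α} {s : Set α} (hμs : μ s ≠ ⊤)
    {p : ENNReal} (hp : 1 ≤ p) {f : α → E} (hf : MemLp f p (μ.restrict s))
    (h0 : ∀ x ∉ s, f x = 0) : Integrable f μ := by
  have : IsFiniteMeasure (μ.restrict s) := isFiniteMeasure_restrict.mpr hμs
  exact (integrableOn_iff_integrable_of_support_subset
    (fun x hx => by_contra fun hxs => hx (h0 x hxs))).mp (hf.integrable hp)

noncomputable def delayVolterra (a : ℝ) (q : ℝ → ℂ) (ρ : ℂ) (g : ℝ → ℂ) (x : ℝ) : ℂ :=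
  ∫ t in a..x, (Complex.sin (ρ * ((x - t : ℝ) : ℂ)) / ρ) * q t * g (t - a)

section delayVolterra

variable {a : ℝ} {q : ℝ → ℂ} {ρ : ℂ}

theorem ySeq_succ (ν k : ℕ) :
    ySeq a q ρ ν (k + 1) = delayVolterra a q ρ (ySeq a q ρ ν k) := rfl

theorem intervalIntegrable_mul_mul {g h : ℝ → ℂ} (hq : Integrable q) (hg : Continuous g)
    (hh : Continuous h) (b c : ℝ) :
    IntervalIntegrable (fun t => g t * q t * h t) volume b c :=
  (hq.intervalIntegrable.continuousOn_mul hg.continuousOn).mul_continuousOn hh.continuousOn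

theorem intervalIntegrable_delayVolterra_integrand {g : ℝ → ℂ} (hq : Integrable q)
    (hg : Continuous g) (x b c : ℝ) :
    IntervalIntegrable
      (fun t => (Complex.sin (ρ * ((x - t : ℝ) : ℂ)) / ρ) * q t * g (t - a)) volume b c :=
  intervalIntegrable_mul_mul hq (by fun_prop) (by fun_prop) b c

theorem delayVolterra_eq_sub {g : ℝ → ℂ} (hq : Integrable q) (hg : Continuous g) (x : ℝ) :
    delayVolterra a q ρ g x =
      Complex.sin (ρ * x) / ρ * (∫ t in a..x, Complex.cos (ρ * t) * q t * g (t - a))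
        - Complex.cos (ρ * x) / ρ * ∫ t in a..x, Complex.sin (ρ * t) * q t * g (t - a) := by
  have hg' : Continuous fun t => g (t - a) := hg.comp (continuous_sub_right a)
  have hcos := intervalIntegrable_mul_mul (g := fun t : ℝ => Complex.cos (ρ * t)) hq
    (by fun_prop) hg' a x
  have hsin := intervalIntegrable_mul_mul (g := fun t : ℝ => Complex.sin (ρ * t)) hq
    (by fun_prop) hg' a x
  rw [← intervalIntegral.integral_const_mul, ← intervalIntegral.integral_const_mul,
    ← intervalIntegral.integral_sub (hcos.const_mul _) (hsin.const_mul _), delayVolterra]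
  refine intervalIntegral.integral_congr fun t _ => ?_
  simp only [Complex.ofReal_sub, mul_sub, Complex.sin_sub]
  ring

theorem continuous_delayVolterra {g : ℝ → ℂ} (hq : Integrable q) (hg : Continuous g) :
    Continuous (delayVolterra a q ρ g) := by
  rw [funext (delayVolterra_eq_sub hq hg)]
  have hg' : Continuous fun t => g (t - a) := hg.comp (continuous_sub_right a)
  have hcos := intervalIntegral.continuous_primitive (intervalIntegrable_mul_mul
    (g := fun t : ℝ => Complex.cos (ρ * t)) hq (by fun_prop) hg') a
  have hsin := intervalIntegral.continuous_primitive (intervalIntegrable_mul_mul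
    (g := fun t : ℝ => Complex.sin (ρ * t)) hq (by fun_prop) hg') a
  fun_prop

theorem delayVolterra_add {f g : ℝ → ℂ} (hq : Integrable q) (hf : Continuous f)
    (hg : Continuous g) (x : ℝ) :
    delayVolterra a q ρ (f + g) x = delayVolterra a q ρ f x + delayVolterra a q ρ g x := by
  simp only [delayVolterra]
  rw [← intervalIntegral.integral_add
    (intervalIntegrable_delayVolterra_integrand hq hf x a x)
    (intervalIntegrable_delayVolterra_integrand hq hg x a x)]
  simp only [Pi.add_apply, mul_add]

theorem delayVolterra_eq_zero {g : ℝ → ℂ} {x : ℝ}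
    (h : ∀ᵐ t, t ∈ uIoc a x → q t * g (t - a) = 0) : delayVolterra a q ρ g x = 0 := by
  rw [delayVolterra, intervalIntegral.integral_congr_ae (g := fun _ => 0),
    intervalIntegral.integral_zero]
  filter_upwards [h] with t ht htx
  rw [mul_assoc, ht htx, mul_zero]

variable (ν : ℕ)

theorem continuous_y0 : Continuous (y0 ρ ν) := by
  unfold y0
  split_ifs <;> fun_prop

theorem continuous_ySeq (hq : Integrable q) (k : ℕ) : Continuous (ySeq a q ρ ν k) := by
  induction k with
  | zero => exact continuous_y0 ν
  | succ k ih => exact continuous_delayVolterra hq ih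

theorem ySeq_succ_eq_zero_of_le (hqa : ∀ t ≤ a, q t = 0) (k : ℕ) {x : ℝ}
    (hx : x ≤ (k + 1) * a) : ySeq a q ρ ν (k + 1) x = 0 := by
  induction k generalizing x with
  | zero =>
    norm_num at hx
    refine delayVolterra_eq_zero (Filter.Eventually.of_forall fun t ht => ?_)
    rw [hqa t ((mem_uIoc.mp ht).elim (fun h => by linarith [h.2]) (fun h => h.2)), zero_mul]
  | succ k ih =>
    refine delayVolterra_eq_zero (Filter.Eventually.of_forall fun t ht => ?_)
    rcases le_or_gt t a with hta | hta
    · rw [hqa t hta, zero_mul]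
    · have htx : t ≤ x := (mem_uIoc.mp ht).elim (fun h => h.2) (fun h => by linarith [h.2])
      push_cast at hx
      rw [ih (by linarith), mul_zero]

theorem ySeq_three_eq_zero (hqa : ∀ t ≤ a, q t = 0) (hq3a : ∀ᵐ t, 3 * a < t → q t = 0)
    (x : ℝ) : ySeq a q ρ ν 3 x = 0 := by
  refine delayVolterra_eq_zero ?_
  filter_upwards [hq3a] with t ht _
  rcases le_or_gt t (3 * a) with h | h
  · rw [ySeq_succ_eq_zero_of_le ν hqa 1 (by norm_num; linarith), mul_zero]
  · rw [ht h, zero_mul]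

end delayVolterra

theorem statement1_general
    (a : ℝ) (ha : a ∈ Set.Ioo 0 (π / 3))
    (q : ℝ → ℂ)
    (hq2 : MemLp q 2 (volume.restrict (Set.Ioo 0 π)))
    (hq0 : ∀ x : ℝ, x ∉ Set.Ioo a π → q x = 0)
    (hq3 : ∀ᵐ x ∂(volume.restrict (Set.Ioo (3 * a) π)), q x = 0)
    (ρ : ℂ) :
    ∀ ν : ℕ, (ν = 0 ∨ ν = 1) →
      (∀ x ∈ Set.Icc (0 : ℝ) π, ySeq a q ρ ν 3 x = 0) ∧
      (∀ x ∈ Set.Icc (0 : ℝ) π,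
        Yfun a q ρ ν x = y0 ρ ν x + ∫ t in a..x,
          (Complex.sin (ρ * ((x - t : ℝ) : ℂ)) / ρ) * q t * Yfun a q ρ ν (t - a)) := by
  intro ν _
  have hq : Integrable q := hq2.integrable_of_eq_zero_off measure_Ioo_lt_top.ne (by norm_num)
    fun x hx => hq0 x fun h => hx ⟨ha.1.trans h.1, h.2⟩
  have hqa : ∀ t ≤ a, q t = 0 := fun t ht => hq0 t fun h => (not_lt.mpr ht) h.1
  have hq3a : ∀ᵐ t, 3 * a < t → q t = 0 := by
    filter_upwards [(ae_restrict_iff' measurableSet_Ioo).mp hq3] with t ht h3t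
    by_cases htπ : t < π
    · exact ht ⟨h3t, htπ⟩
    · exact hq0 t fun h => htπ h.2
  have hy3 := ySeq_three_eq_zero (ρ := ρ) ν hqa hq3a
  refine ⟨fun x _ => hy3 x, fun x _ => ?_⟩
  have hY : Yfun a q ρ ν = ySeq a q ρ ν 0 + ySeq a q ρ ν 1 + ySeq a q ρ ν 2 := rfl
  change _ = _ + delayVolterra a q ρ (Yfun a q ρ ν) x
  have hc := continuous_ySeq (a := a) (ρ := ρ) ν hq
  rw [hY, delayVolterra_add hq ((hc 0).add (hc 1)) (hc 2), delayVolterra_add hq (hc 0) (hc 1),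
    ← ySeq_succ, ← ySeq_succ, ← ySeq_succ, hy3]
  simp only [Pi.add_apply, ySeq, add_zero, add_assoc]

theorem statement1
    (a : ℝ) (ha : a ∈ Set.Ioo 0 (π / 3))
    (q : ℝ → ℂ)
    (hq2 : MemLp q 2 (volume.restrict (Set.Ioo 0 π)))
    (hq0 : ∀ x : ℝ, x ∉ Set.Ioo a π → q x = 0)
    (hq3 : ∀ᵐ x ∂(volume.restrict (Set.Ioo (3 * a) π)), q x = 0)
    (ρ : ℂ) (hρ : ρ ≠ 0) (lam : ℂ) (hlam : lam = ρ ^ 2) :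
    ∀ ν : ℕ, (ν = 0 ∨ ν = 1) →
      (∀ x ∈ Set.Icc (0 : ℝ) π, ySeq a q ρ ν 3 x = 0) ∧
      (∀ x ∈ Set.Icc (0 : ℝ) π,
        Yfun a q ρ ν x = y0 ρ ν x + ∫ t in a..x,
          (Complex.sin (ρ * ((x - t : ℝ) : ℂ)) / ρ) * q t * Yfun a q ρ ν (t - a)) :=
  statement1_general a ha q hq2 hq0 hq3 ρ
end

section
/- Fix a ∈ (0, π/3). Let h_1 : ℝ → ℝ be square-integrable, vanishing outside (5a/2, 3a), and let e_1 : ℝ → ℂ be square-integrable on (3a/2, 2a), satisfy (M_{h_1} e_1)(x) = −e_1(x) for almost every x ∈ (3a/2, 2a), where K_{h_1}(x) = ∫_x^{3a} h_1(τ) dτ and (M_{h_1} f)(x) = ∫_{3a/2}^{7a/2−x} K_{h_1}(x + t − a/2) f(t) dt, and additionally satisfy ∫_{3a/2}^{2a} e_1(x) dx = 0. For α ∈ ℂ define q_{α,1} : ℝ → ℂ by: q_{α,1}(x) = 0 for x ∈ (0, 3a/2); q_{α,1}(x) = α e_1(x) for x ∈ (3a/2, 2a); q_{α,1}(x) = −α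 K_{h_1}(x + a/2) ∫_{3a/2}^{x−a/2} e_1(t) dt for x ∈ (2a, 5a/2); q_{α,1}(x) = h_1(x) for x ∈ (5a/2, 3a); and q_{α,1}(x) = 0 for x ∈ (3a, π) and outside (0, π). Then for every α ∈ ℂ: ∫_a^π q_{α,1}(x) dx = ∫_{5a/2}^{3a} h_1(x) dx; in particular this integral is independent of α. -/
open MeasureTheory Set
open scoped Real

noncomputable def Kfun (a : ℝ) (h : ℝ → ℂ) (x : ℝ) : ℂ := ∫ τ in x..(3 * a), h τ

noncomputable def Mop (a : ℝ) (h f : ℝ → ℂ) (x : ℝ) : ℂ :=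
  ∫ t in (3 * a / 2)..(7 * a / 2 - x), Kfun a h (x + t - a / 2) * f t

noncomputable def qfam (a : ℝ) (h e : ℝ → ℂ) (α : ℂ) (x : ℝ) : ℂ :=
  if x ∈ Set.Ioo (3 * a / 2) (2 * a) then α * e x
  else if x ∈ Set.Ioo (2 * a) (5 * a / 2) then
    -α * Kfun a h (x + a / 2) * (∫ t in (3 * a / 2)..(x - a / 2), e t)
  else if x ∈ Set.Ioo (5 * a / 2) (3 * a) then h x
  else 0

/-
Write E for the primitive of e from 3a/2. On (2a, 5a/2), q_{α,1} = −α K(x + a/2) E(x − a/2),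
and the piece α ∫ e vanishes by the mean-zero condition, so after the shift s = x − a/2 everything
reduces to ∫_{3a/2}^{2a} K(s + a) E(s) ds = 0. By Dirichlet's formula (Fubini on a triangle) this
integral equals ∫ e(t) ∫_{t+a}^{3a} K; reflecting x ↦ 7a/2 − x and applying Dirichlet's formula once
more gives the same expression for ∫_{3a/2}^{2a} M_h e, which is −∫ e = 0 by the eigenvalue
equation.
-/

theorem intervalIntegral.integral_integral_triangle_swap {𝕜 : Type*} [RCLike 𝕜] {c d : ℝ}
    (hcd : c ≤ d) {k : ℝ → ℝ → 𝕜} (hk : Continuous (Function.uncurry k)) {f : ℝ → 𝕜}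
    (hf : IntervalIntegrable f volume c d) :
    ∫ x in c..d, ∫ t in c..x, k x t * f t = ∫ t in c..d, f t * ∫ x in t..d, k x t := by
  set μ := volume.restrict (Ioc c d)
  have hfμ : Integrable f μ := (intervalIntegrable_iff_integrableOn_Ioc_of_le hcd).1 hf
  set F : ℝ → ℝ → 𝕜 := fun x t => (Iic x).indicator (fun t => k x t * f t) t
  have hF : Integrable (Function.uncurry F) (μ.prod μ) := by
    obtain ⟨C, hC⟩ := (isCompact_Icc.prod isCompact_Icc).exists_bound_of_continuousOn
      (hk.continuousOn (s := Icc c d ×ˢ Icc c d))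
    have hbound : ∀ᵐ p ∂(μ.prod μ), ‖Function.uncurry k p‖ ≤ C := by
      rw [Measure.prod_restrict, ae_restrict_iff' (measurableSet_Ioc.prod measurableSet_Ioc)]
      exact .of_forall fun p hp => hC p ⟨Ioc_subset_Icc_self hp.1, Ioc_subset_Icc_self hp.2⟩
    have hprod := (hfμ.comp_snd μ).bdd_mul hk.aestronglyMeasurable hbound
    have hFeq : Function.uncurry F = {p : ℝ × ℝ | p.2 ≤ p.1}.indicator
        (fun p => Function.uncurry k p * f p.2) := by
      ext ⟨x, t⟩; simp [F, indicator_apply]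
    exact hFeq ▸ hprod.indicator (measurableSet_le measurable_snd measurable_fst)
  have inner_t : ∀ x ∈ Ioc c d, ∫ t, F x t ∂μ = ∫ t in c..x, k x t * f t := fun x hx => by
    rw [MeasureTheory.integral_indicator measurableSet_Iic,
      Measure.restrict_restrict measurableSet_Iic,
      Iic_inter_Ioc_of_le hx.2, intervalIntegral.integral_of_le hx.1.le]
  have inner_x : ∀ t ∈ Ioc c d, ∫ x, F x t ∂μ = f t * ∫ x in t..d, k x t := fun t ht => by
    have hFt : (fun x => F x t) = (Ici t).indicator (fun x => k x t * f t) := by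
      ext x; simp [F, indicator_apply]
    have hset : Ici t ∩ Ioc c d = Icc t d := by
      ext x
      simp only [mem_inter_iff, mem_Ici, mem_Ioc, mem_Icc]
      exact ⟨fun hx => ⟨hx.1, hx.2.2⟩, fun hx => ⟨hx.1, ht.1.trans_le hx.1, hx.2⟩⟩
    rw [hFt, MeasureTheory.integral_indicator measurableSet_Ici,
      Measure.restrict_restrict measurableSet_Ici,
      hset, MeasureTheory.integral_mul_const, mul_comm, integral_Icc_eq_integral_Ioc,
      intervalIntegral.integral_of_le ht.2]
  calc ∫ x in c..d, ∫ t in c..x, k x t * f t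
      = ∫ x, ∫ t, F x t ∂μ ∂μ := by
        rw [intervalIntegral.integral_of_le hcd]
        exact setIntegral_congr_fun measurableSet_Ioc fun x hx => (inner_t x hx).symm
    _ = ∫ t, ∫ x, F x t ∂μ ∂μ := integral_integral_swap hF
    _ = ∫ t in c..d, f t * ∫ x in t..d, k x t := by
        rw [intervalIntegral.integral_of_le hcd]
        exact setIntegral_congr_fun measurableSet_Ioc inner_x

theorem intervalIntegral.integral_indicator_Ioo {E : Type*} [NormedAddCommGroup E] [NormedSpace ℝ E]
    {f : ℝ → E} {a b p r : ℝ} (hap : a ≤ p) (hpr : p ≤ r) (hrb : r ≤ b) :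
    ∫ x in a..b, (Ioo p r).indicator f x = ∫ x in p..r, f x := by
  rw [intervalIntegral.integral_of_le (hap.trans (hpr.trans hrb)),
    MeasureTheory.integral_indicator measurableSet_Ioo, Measure.restrict_restrict measurableSet_Ioo,
    inter_eq_left.2 (Ioo_subset_Ioc_self.trans (Ioc_subset_Ioc hap hrb)),
    intervalIntegral.integral_of_le hpr, integral_Ioc_eq_integral_Ioo]

section

variable {a : ℝ} {h e : ℝ → ℂ}

theorem continuous_Kfun (hh : LocallyIntegrable h) : Continuous (Kfun a h) := by
  have hsymm : Kfun a h = fun x => -∫ τ in (3 * a)..x, h τ :=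
    funext fun x => intervalIntegral.integral_symm _ _
  rw [hsymm]
  exact (intervalIntegral.continuous_primitive
    (fun _ _ => (hh.integrableOn_isCompact isCompact_uIcc).intervalIntegrable) _).neg

theorem integral_Kfun_mul_primitive (ha : 0 ≤ a) (hh : LocallyIntegrable h)
    (he : IntervalIntegrable e volume (3 * a / 2) (2 * a)) :
    ∫ s in (3 * a / 2)..(2 * a), Kfun a h (s + a) * ∫ t in (3 * a / 2)..s, e t
      = ∫ t in (3 * a / 2)..(2 * a), e t * ∫ u in (t + a)..(3 * a), Kfun a h u := by
  have hK := continuous_Kfun (a := a) hh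
  have hswap := intervalIntegral.integral_integral_triangle_swap (k := fun s _ => Kfun a h (s + a))
    (by linarith) (by fun_prop) he
  simp only [intervalIntegral.integral_const_mul] at hswap
  rw [hswap]
  congr 1; ext t
  rw [intervalIntegral.integral_comp_add_right (Kfun a h), show 2 * a + a = 3 * a by ring]

theorem integral_Mop (ha : 0 ≤ a) (hh : LocallyIntegrable h)
    (he : IntervalIntegrable e volume (3 * a / 2) (2 * a)) :
    ∫ x in (3 * a / 2)..(2 * a), Mop a h e x
      = ∫ t in (3 * a / 2)..(2 * a), e t * ∫ u in (t + a)..(3 * a), Kfun a h u := by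
  have hK := continuous_Kfun (a := a) hh
  have hreflect := intervalIntegral.integral_comp_sub_left
    (fun y => ∫ t in (3 * a / 2)..y, Kfun a h (3 * a + t - y) * e t) (7 * a / 2)
    (a := 3 * a / 2) (b := 2 * a)
  rw [show 7 * a / 2 - 2 * a = 3 * a / 2 by ring, show 7 * a / 2 - 3 * a / 2 = 2 * a by ring]
    at hreflect
  calc ∫ x in (3 * a / 2)..(2 * a), Mop a h e x
      = ∫ x in (3 * a / 2)..(2 * a), ∫ t in (3 * a / 2)..x, Kfun a h (3 * a + t - x) * e t := by
        rw [← hreflect]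
        congr 1; ext x
        unfold Mop
        congr 1; ext t
        congr 2; ring
    _ = ∫ t in (3 * a / 2)..(2 * a), e t * ∫ x in t..(2 * a), Kfun a h (3 * a + t - x) :=
        intervalIntegral.integral_integral_triangle_swap (by linarith) (by fun_prop) he
    _ = ∫ t in (3 * a / 2)..(2 * a), e t * ∫ u in (t + a)..(3 * a), Kfun a h u := by
        congr 1; ext t
        rw [intervalIntegral.integral_comp_sub_left (Kfun a h)]
        congr 2 <;> ring

theorem integral_Kfun_mul_primitive_eq_zero (ha : 0 ≤ a) (hh : LocallyIntegrable h)
    (he : IntervalIntegrable e volume (3 * a / 2) (2 * a))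
    (heig : ∀ᵐ x ∂(volume.restrict (Ioo (3 * a / 2) (2 * a))), Mop a h e x = -e x)
    (hmean : ∫ x in (3 * a / 2)..(2 * a), e x = 0) :
    ∫ s in (3 * a / 2)..(2 * a), Kfun a h (s + a) * ∫ t in (3 * a / 2)..s, e t = 0 := by
  have hle : 3 * a / 2 ≤ 2 * a := by linarith
  rw [integral_Kfun_mul_primitive ha hh he, ← integral_Mop ha hh he]
  calc ∫ x in (3 * a / 2)..(2 * a), Mop a h e x = ∫ x in (3 * a / 2)..(2 * a), -e x := by
        simp only [intervalIntegral.integral_of_le hle, integral_Ioc_eq_integral_Ioo]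
        exact integral_congr_ae heig
    _ = 0 := by rw [intervalIntegral.integral_neg, hmean, neg_zero]

theorem qfam_eq_indicator_add (α : ℂ) :
    qfam a h e α = (Ioo (3 * a / 2) (2 * a)).indicator (fun x => α * e x)
      + (Ioo (2 * a) (5 * a / 2)).indicator
          (fun x => -α * Kfun a h (x + a / 2) * ∫ t in (3 * a / 2)..(x - a / 2), e t)
      + (Ioo (5 * a / 2) (3 * a)).indicator h := by
  ext x
  simp only [qfam, Pi.add_apply, indicator_apply]
  split_ifs <;> simp_all only [mem_Ioo, add_zero, zero_add, not_and, not_lt] <;> linarith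

theorem integral_qfam_middle (α : ℂ) :
    ∫ x in (2 * a)..(5 * a / 2), -α * Kfun a h (x + a / 2) * ∫ t in (3 * a / 2)..(x - a / 2), e t
      = -α * ∫ s in (3 * a / 2)..(2 * a), Kfun a h (s + a) * ∫ t in (3 * a / 2)..s, e t := by
  have hshift := intervalIntegral.integral_comp_sub_right
    (fun s => Kfun a h (s + a) * ∫ t in (3 * a / 2)..s, e t) (a / 2)
    (a := 2 * a) (b := 5 * a / 2)
  rw [show 2 * a - a / 2 = 3 * a / 2 by ring, show 5 * a / 2 - a / 2 = 2 * a by ring] at hshift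
  simp_rw [show ∀ x : ℝ, x - a / 2 + a = x + a / 2 from fun x => by ring] at hshift
  simp_rw [mul_assoc]
  rw [intervalIntegral.integral_const_mul, hshift]

theorem integrableOn_qfam_middle (ha : 0 ≤ a) (hh : LocallyIntegrable h)
    (he : IntervalIntegrable e volume (3 * a / 2) (2 * a)) (α : ℂ) :
    IntegrableOn
      (fun x => -α * Kfun a h (x + a / 2) * ∫ t in (3 * a / 2)..(x - a / 2), e t)
      (Ioo (2 * a) (5 * a / 2)) := by
  have hE := intervalIntegral.continuousOn_primitive_interval' he left_mem_uIcc
  have hmaps : MapsTo (fun x => x - a / 2) (Icc (2 * a) (5 * a / 2)) (uIcc (3 * a / 2) (2 * a)) :=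
    fun x hx => by
      rw [uIcc_of_le (by linarith)]
      exact ⟨by linarith [hx.1], by linarith [hx.2]⟩
  refine (ContinuousOn.integrableOn_Icc ?_).mono_set Ioo_subset_Icc_self
  have hK := continuous_Kfun (a := a) hh
  exact (continuousOn_const.mul (hK.comp (continuous_add_const _)).continuousOn).mul
    (hE.comp (continuousOn_id.sub continuousOn_const) hmaps)

end

theorem statement18_general
    (a : ℝ) (ha : a ∈ Set.Ioo 0 (π / 3))
    (h : ℝ → ℝ)
    (hh2 : MemLp h 2 volume)
    (e : ℝ → ℂ)
    (he2 : MemLp e 2 (volume.restrict (Set.Ioo (3 * a / 2) (2 * a))))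
    (heig : ∀ᵐ x ∂(volume.restrict (Set.Ioo (3 * a / 2) (2 * a))),
      Mop a (fun y => (h y : ℂ)) e x = -e x)
    (hmean : (∫ x in (3 * a / 2)..(2 * a), e x) = 0) :
    ∀ α : ℂ,
      (∫ x in a..π, qfam a (fun y => (h y : ℂ)) e α x)
        = ∫ x in (5 * a / 2)..(3 * a), (h x : ℂ) := by
  intro α
  obtain ⟨ha0, haπ⟩ := ha
  have hh : LocallyIntegrable (fun y => (h y : ℂ)) := hh2.ofReal.locallyIntegrable (by norm_num)
  have he : IntegrableOn e (Ioo (3 * a / 2) (2 * a)) := he2.integrable (by norm_num)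
  have he' : IntervalIntegrable e volume (3 * a / 2) (2 * a) :=
    (intervalIntegrable_iff_integrableOn_Ioo_of_le (by linarith)).2 he
  have hhI : IntegrableOn (fun y => (h y : ℂ)) (Ioo (5 * a / 2) (3 * a)) :=
    (hh.integrableOn_isCompact isCompact_Icc).mono_set Ioo_subset_Icc_self
  have hmid := integrableOn_qfam_middle ha0.le hh he' α
  have hint₁ := (IntegrableOn.integrable_indicator (he.const_mul α)
    measurableSet_Ioo).intervalIntegrable (a := a) (b := π)
  have hint₂ := (hmid.integrable_indicator measurableSet_Ioo).intervalIntegrable (a := a) (b := π)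
  have hint₃ := (hhI.integrable_indicator measurableSet_Ioo).intervalIntegrable (a := a) (b := π)
  rw [qfam_eq_indicator_add]
  simp only [Pi.add_apply]
  rw [intervalIntegral.integral_add (hint₁.add hint₂) hint₃,
    intervalIntegral.integral_add hint₁ hint₂, intervalIntegral.integral_indicator_Ioo,
    intervalIntegral.integral_indicator_Ioo, intervalIntegral.integral_indicator_Ioo,
    intervalIntegral.integral_const_mul, hmean, integral_qfam_middle,
    integral_Kfun_mul_primitive_eq_zero ha0.le hh he' heig hmean]
  · simp
  all_goals linarith

theorem statement18
    (a : ℝ) (ha : a ∈ Set.Ioo 0 (π / 3))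
    (h : ℝ → ℝ)
    (hh2 : MemLp h 2 volume)
    (hh0 : ∀ x : ℝ, x ∉ Set.Ioo (5 * a / 2) (3 * a) → h x = 0)
    (e : ℝ → ℂ)
    (he2 : MemLp e 2 (volume.restrict (Set.Ioo (3 * a / 2) (2 * a))))
    (heig : ∀ᵐ x ∂(volume.restrict (Set.Ioo (3 * a / 2) (2 * a))),
      Mop a (fun y => (h y : ℂ)) e x = -e x)
    (hmean : (∫ x in (3 * a / 2)..(2 * a), e x) = 0) :
    ∀ α : ℂ,
      (∫ x in a..π, qfam a (fun y => (h y : ℂ)) e α x)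
        = ∫ x in (5 * a / 2)..(3 * a), (h x : ℂ) :=
  statement18_general a ha h hh2 e he2 heig hmean
end
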